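/- For an alternating path P⃗ₙ on an odd number n of vertices (an orientation of the path Pₙ in which every vertex is a source or a sink), th(P⃗ₙ) = (n−1)/2 + ⌈√(n+1) − 1/2⌉; and for even n, th(P⃗ₙ) = n/2 + ⌈√(n+1) − 1⌉. -/

import Mathlib

/-!
The even vertices are sources, so they lie in every zero forcing set. Once they are blue, the odd
vertices (the sinks `2 * k + 1`, `k < n / 2`) behave like a path along which blue spreads one step
per time unit in both directions: sink `k` is blue at time `t` iff it lies within distance `t` of a
seeded sink, or `k < t` (source `0` forces sink `0` at once), or, for odd `n`, `n / 2 ≤ k + t`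
(source `n - 1` does the same at the other end). With `b` seeded sinks and propagation time `t`,
the sinks all turn blue iff `n / 2 ≤ (n % 2 + 1) t + b (2 t + 1)`, i.e.
`n + 1 ≤ (2 t + 1) (2 b + 1 + n % 2)`, so `th = ⌈n / 2⌉ + min (b + t)` over such pairs. By AM-GM
the product is at most `((2 (b + t) + 2 + n % 2) / 2) ^ 2`, which gives the lower bound, and
making the two factors as equal as possible attains it.
-/

open Set

/-- One time step of standard zero forcing on a digraph with arc relation `A`:
every blue vertex having a unique white out-neighbor forces it blue. -/
def dstep {V : Type*} (A : V → V → Prop) (S : Set V) : Set V :=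
  S ∪ {w | ∃ u ∈ S, A u w ∧ ∀ x, A u x → x ∉ S → x = w}

/-- `B` is a zero forcing set of the digraph with arc relation `A`. -/
def IsZFS {V : Type*} (A : V → V → Prop) (B : Set V) : Prop :=
  ∃ t, (dstep A)^[t] B = Set.univ

/-- Propagation time of `B` in the digraph with arc relation `A`. -/
noncomputable def dpt {V : Type*} (A : V → V → Prop) (B : Set V) : ℕ :=
  sInf {t | (dstep A)^[t] B = Set.univ}

/-- The throttling number of the digraph with arc relation `A`. -/
noncomputable def dth {V : Type*} (A : V → V → Prop) : ℕ :=
  sInf {k | ∃ B : Set V, IsZFS A B ∧ k = B.ncard + dpt A B}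

section ZeroForcing

variable {V : Type*} {A : V → V → Prop}

lemma subset_dstep (A : V → V → Prop) (S : Set V) : S ⊆ dstep A S :=
  Set.subset_union_left

lemma mem_dstep_of_forall {S : Set V} {u v : V} (hu : u ∈ S) (huv : A u v)
    (h : ∀ x, A u x → x ≠ v → x ∈ S) : v ∈ dstep A S :=
  Or.inr ⟨u, hu, huv, fun x hx hxS => by_contra fun hxv => hxS (h x hx hxv)⟩

lemma subset_iterate_dstep (A : V → V → Prop) (S : Set V) (t : ℕ) : S ⊆ (dstep A)^[t] S := by
  induction t with
  | zero => exact subset_rfl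
  | succ t ih => exact ih.trans (Function.iterate_succ_apply' (dstep A) t S ▸ subset_dstep A _)

lemma IsZFS.mem_of_forall_not {B : Set V} {v : V} (hB : IsZFS A B) (hv : ∀ u, ¬ A u v) :
    v ∈ B := by
  obtain ⟨t, ht⟩ := hB
  have hmem : v ∈ (dstep A)^[t] B := ht ▸ Set.mem_univ v
  clear ht
  induction t with
  | zero => exact hmem
  | succ t ih =>
    rw [Function.iterate_succ_apply'] at hmem
    rcases hmem with hmem | ⟨u, -, huv, -⟩
    · exact ih hmem
    · exact absurd huv (hv u)

lemma dth_le_of_iterate_eq_univ {B : Set V} {t : ℕ} (h : (dstep A)^[t] B = Set.univ) :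
    dth A ≤ B.ncard + t :=
  calc dth A ≤ B.ncard + dpt A B := Nat.sInf_le ⟨B, ⟨t, h⟩, rfl⟩
    _ ≤ B.ncard + t := Nat.add_le_add_left (Nat.sInf_le h) _

lemma le_dth_of_forall_iterate_eq_univ {k : ℕ}
    (h : ∀ (B : Set V) (t : ℕ), (dstep A)^[t] B = Set.univ → k ≤ B.ncard + t) : k ≤ dth A :=
  le_csInf ⟨_, Set.univ, ⟨0, rfl⟩, rfl⟩ fun _ ⟨B, hB, hk⟩ => hk ▸ h B _ (Nat.sInf_mem hB)

end ZeroForcing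

lemma le_sq_ceil_sqrt_sub_add (a : ℝ) {δ : ℝ} (hδ : 0 ≤ δ) : a ≤ (⌈√a - δ⌉₊ + δ) ^ 2 :=
  (Real.sqrt_le_left (by positivity)).1 (by linarith [Nat.le_ceil (√a - δ)])

lemma two_mul_sqrt_le_add {a x y : ℝ} (hx : 0 ≤ x) (hy : 0 ≤ y) (h : a ≤ x * y) :
    2 * √a ≤ x + y := by
  rcases le_or_gt a 0 with ha | ha
  · rw [Real.sqrt_eq_zero_of_nonpos ha]
    linarith
  · exact two_mul_le_add_of_sq_le_mul hx hy (by rwa [Real.sq_sqrt ha.le])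

namespace AlternatingPath

def arc (n : ℕ) : Fin n → Fin n → Prop :=
  fun i j => ((j : ℕ) = (i : ℕ) + 1 ∨ (i : ℕ) = (j : ℕ) + 1) ∧ Even (i : ℕ)

/-- A set of vertices seen on the sinks: sink `2 * k + 1` is recorded by its index `k`. -/
def sinks {n : ℕ} (S : Set (Fin n)) : Set ℕ :=
  {k | ∃ v ∈ S, (v : ℕ) = 2 * k + 1}

def spread (n : ℕ) (K : Set ℕ) : Set ℕ :=
  {k | k < n / 2 ∧ (k ∈ K ∨ k = 0 ∨ k - 1 ∈ K ∨ k + 1 ∈ K ∨ (Odd n ∧ k + 1 = n / 2))}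

variable {n : ℕ}

lemma not_arc_of_even {u v : Fin n} (hv : Even (v : ℕ)) : ¬ arc n u v := by
  rintro ⟨huv, hu⟩
  rw [Nat.even_iff] at hu hv
  omega

lemma sinks_subset_Iio (S : Set (Fin n)) : sinks S ⊆ Set.Iio (n / 2) := by
  rintro k ⟨v, -, hv⟩
  have := v.isLt
  simp only [Set.mem_Iio]
  omega

lemma mem_of_mem_sinks {S : Set (Fin n)} {k : ℕ} {v : Fin n} (hk : k ∈ sinks S)
    (hv : (v : ℕ) = 2 * k + 1) : v ∈ S := by
  obtain ⟨w, hw, hwk⟩ := hk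
  exact (Fin.ext (hv.trans hwk.symm) : v = w) ▸ hw

lemma sinks_dstep_subset (S : Set (Fin n)) : sinks (dstep (arc n) S) ⊆ spread n (sinks S) := by
  rintro k ⟨v, hv | ⟨u, -, ⟨hvu, hu⟩, huniq⟩, hvk⟩
  · exact ⟨sinks_subset_Iio S ⟨v, hv, hvk⟩, Or.inl ⟨v, hv, hvk⟩⟩
  have hvn := v.isLt
  have hun := u.isLt
  have hblue (x : Fin n) (hux : arc n u x) (hxv : (x : ℕ) ≠ v) : x ∈ S :=
    by_contra fun hxS => hxv (congrArg Fin.val (huniq x hux hxS))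
  rw [Nat.even_iff] at hu
  refine ⟨by omega, ?_⟩
  rcases hvu with hvu | hvu
  · rcases Nat.eq_zero_or_pos k with rfl | hk
    · exact Or.inr (Or.inl rfl)
    · refine Or.inr (Or.inr (Or.inl ⟨⟨2 * k - 1, by omega⟩, ?_, by simp; omega⟩))
      exact hblue _ ⟨Or.inr (by simp; omega), Nat.even_iff.2 hu⟩ (by simp; omega)
  · by_cases hend : 2 * k + 3 = n
    · exact Or.inr (Or.inr (Or.inr (Or.inr ⟨⟨k + 1, by omega⟩, by omega⟩)))
    · refine Or.inr (Or.inr (Or.inr (Or.inl ⟨⟨2 * k + 3, by omega⟩, ?_, by simp; omega⟩)))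
      exact hblue _ ⟨Or.inl (by simp; omega), Nat.even_iff.2 hu⟩ (by simp; omega)

lemma spread_subset_sinks_dstep {S : Set (Fin n)} (hS : ∀ v : Fin n, Even (v : ℕ) → v ∈ S) :
    spread n (sinks S) ⊆ sinks (dstep (arc n) S) := by
  rintro k ⟨hk, h⟩
  have hu (u : ℕ) (hun : u < n) (huv : u = 2 * k ∨ u = 2 * k + 2) : (⟨u, hun⟩ : Fin n) ∈ S :=
    hS _ (Nat.even_iff.2 (by simp only; omega))
  refine ⟨⟨2 * k + 1, by omega⟩, ?_, rfl⟩
  rcases h with hK | rfl | hK | hK | ⟨hn, hkn⟩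
  · exact subset_dstep _ _ (mem_of_mem_sinks hK rfl)
  · refine mem_dstep_of_forall (hu 0 (by omega) (by omega)) ⟨Or.inl rfl, ⟨0, rfl⟩⟩ ?_
    rintro x ⟨hx | hx, -⟩ hxv
    · exact absurd (Fin.ext hx) hxv
    · simp at hx
  · obtain rfl | hk0 := Nat.eq_zero_or_pos k
    · exact subset_dstep _ _ (mem_of_mem_sinks hK rfl)
    refine mem_dstep_of_forall (hu (2 * k) (by omega) (by omega))
      ⟨Or.inl rfl, Nat.even_iff.2 (by simp)⟩ ?_
    rintro x ⟨hx | hx, -⟩ hxv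
    · exact absurd (Fin.ext hx) hxv
    · exact mem_of_mem_sinks hK (by simp only at hx; omega)
  · have hkn : k + 1 < n / 2 := sinks_subset_Iio S hK
    refine mem_dstep_of_forall (hu (2 * k + 2) (by omega) (by omega))
      ⟨Or.inr rfl, Nat.even_iff.2 (by simp only; omega)⟩ ?_
    rintro x ⟨hx | hx, -⟩ hxv
    · exact mem_of_mem_sinks hK (by simp only at hx; omega)
    · exact absurd (Fin.ext (by simp only at hx ⊢; omega)) hxv
  · rw [Nat.odd_iff] at hn
    refine mem_dstep_of_forall (hu (2 * k + 2) (by omega) (by omega))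
      ⟨Or.inr rfl, Nat.even_iff.2 (by simp only; omega)⟩ ?_
    rintro x ⟨hx | hx, -⟩ hxv
    · have := x.isLt
      simp only at hx
      omega
    · exact absurd (Fin.ext (by simp only at hx ⊢; omega)) hxv

lemma sinks_dstep {S : Set (Fin n)} (hS : ∀ v : Fin n, Even (v : ℕ) → v ∈ S) :
    sinks (dstep (arc n) S) = spread n (sinks S) :=
  (sinks_dstep_subset S).antisymm (spread_subset_sinks_dstep hS)

def reach (n : ℕ) (J : Set ℕ) (t : ℕ) : Set ℕ :=
  {k | k < n / 2 ∧ (k < t ∨ (Odd n ∧ n / 2 ≤ k + t) ∨ ∃ j ∈ J, k ≤ j + t ∧ j ≤ k + t)}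

lemma reach_zero {J : Set ℕ} (hJ : J ⊆ Set.Iio (n / 2)) : reach n J 0 = J := by
  ext k
  constructor
  · rintro ⟨hk, hk0 | ⟨-, hkn⟩ | ⟨j, hj, hkj, hjk⟩⟩
    · omega
    · omega
    · exact (le_antisymm hkj hjk : k = j) ▸ hj
  · exact fun hk => ⟨hJ hk, Or.inr (Or.inr ⟨k, hk, le_rfl, le_rfl⟩)⟩

lemma mem_reach_succ {J : Set ℕ} {t k l : ℕ} (hk : k < n / 2) (hl : l ∈ reach n J t)
    (hkl : k ≤ l + 1) (hlk : l ≤ k + 1) : k ∈ reach n J (t + 1) := by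
  obtain ⟨-, hlt | ⟨hn, hln⟩ | ⟨j, hj, hlj, hjl⟩⟩ := hl
  · exact ⟨hk, Or.inl (by omega)⟩
  · exact ⟨hk, Or.inr (Or.inl ⟨hn, by omega⟩)⟩
  · exact ⟨hk, Or.inr (Or.inr ⟨j, hj, by omega, by omega⟩)⟩

lemma spread_reach {J : Set ℕ} (hJ : J ⊆ Set.Iio (n / 2)) (t : ℕ) :
    spread n (reach n J t) = reach n J (t + 1) := by
  ext k
  constructor
  · rintro ⟨hk, hK | rfl | hK | hK | ⟨hn, hkn⟩⟩
    · exact mem_reach_succ hk hK (by omega) (by omega)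
    · exact ⟨hk, Or.inl t.succ_pos⟩
    · exact mem_reach_succ hk hK (by omega) (by omega)
    · exact mem_reach_succ hk hK (by omega) (by omega)
    · exact ⟨hk, Or.inr (Or.inl ⟨hn, by omega⟩)⟩
  · rintro ⟨hk, hkt | ⟨hn, hkn⟩ | ⟨j, hj, hkj, hjk⟩⟩
    · obtain rfl | hk0 := Nat.eq_zero_or_pos k
      · exact ⟨hk, Or.inr (Or.inl rfl)⟩
      · exact ⟨hk, Or.inr (Or.inr (Or.inl ⟨by omega, Or.inl (by omega)⟩))⟩
    · by_cases hkt : n / 2 ≤ k + t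
      · exact ⟨hk, Or.inl ⟨hk, Or.inr (Or.inl ⟨hn, hkt⟩)⟩⟩
      obtain rfl | ht := Nat.eq_zero_or_pos t
      · exact ⟨hk, Or.inr (Or.inr (Or.inr (Or.inr ⟨hn, by omega⟩)))⟩
      · exact ⟨hk, Or.inr (Or.inr (Or.inr (Or.inl ⟨by omega, Or.inr (Or.inl ⟨hn, by omega⟩)⟩)))⟩
    · have hjn : j < n / 2 := hJ hj
      by_cases hkj' : k = j + t + 1
      · exact ⟨hk, Or.inr (Or.inr (Or.inl ⟨by omega, Or.inr (Or.inr ⟨j, hj, by omega, by omega⟩)⟩))⟩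
      by_cases hjk' : j = k + t + 1
      · exact ⟨hk, Or.inr (Or.inr (Or.inr (Or.inl
          ⟨by omega, Or.inr (Or.inr ⟨j, hj, by omega, by omega⟩)⟩)))⟩
      exact ⟨hk, Or.inl ⟨hk, Or.inr (Or.inr ⟨j, hj, by omega, by omega⟩)⟩⟩

lemma sinks_iterate {B : Set (Fin n)} (hB : ∀ v : Fin n, Even (v : ℕ) → v ∈ B) (t : ℕ) :
    sinks ((dstep (arc n))^[t] B) = reach n (sinks B) t := by
  induction t with
  | zero => exact (reach_zero (sinks_subset_Iio B)).symm
  | succ t ih =>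
    rw [Function.iterate_succ_apply', sinks_dstep fun v hv => subset_iterate_dstep _ _ t (hB v hv),
      ih, spread_reach (sinks_subset_Iio B)]

lemma eq_univ_iff_Iio_subset_sinks {S : Set (Fin n)} (hS : ∀ v : Fin n, Even (v : ℕ) → v ∈ S) :
    S = Set.univ ↔ Set.Iio (n / 2) ⊆ sinks S := by
  refine ⟨fun h k hk => ⟨⟨2 * k + 1, by simp at hk; omega⟩, h ▸ Set.mem_univ _, rfl⟩, fun h => ?_⟩
  refine Set.eq_univ_of_forall fun v => ?_
  obtain ⟨k, hk | hk⟩ := Nat.even_or_odd' (v : ℕ)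
  · exact hS v ⟨k, by omega⟩
  · have := v.isLt
    exact mem_of_mem_sinks (h (show k < n / 2 by omega)) hk

lemma ncard_evens : {v : Fin n | Even (v : ℕ)}.ncard = (n + 1) / 2 := by
  have hinj : Set.InjOn (fun v : Fin n => (v : ℕ) / 2) {v | Even (v : ℕ)} := by
    rintro v ⟨a, ha⟩ w ⟨b, hb⟩ hvw
    exact Fin.ext (by simp only at hvw; omega)
  rw [← hinj.ncard_image, ← Set.ncard_Iio_nat ((n + 1) / 2)]
  congr 1
  ext k
  simp only [Set.mem_image, Set.mem_ofPred_eq, Set.mem_Iio]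
  refine ⟨fun ⟨v, ⟨a, ha⟩, hvk⟩ => by have := v.isLt; omega, fun hk => ?_⟩
  exact ⟨⟨2 * k, by omega⟩, ⟨k, by simp only; omega⟩, by simp⟩

lemma ncard_sinks (S : Set (Fin n)) : (sinks S).ncard = {v ∈ S | Odd (v : ℕ)}.ncard := by
  have hinj : Set.InjOn (fun v : Fin n => (v : ℕ) / 2) {v ∈ S | Odd (v : ℕ)} := by
    rintro v ⟨-, a, ha⟩ w ⟨-, b, hb⟩ hvw
    exact Fin.ext (by simp only at hvw; omega)
  rw [← hinj.ncard_image]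
  congr 1
  ext k
  simp only [sinks, Set.mem_image, Set.mem_ofPred_eq]
  constructor
  · rintro ⟨v, hv, hvk⟩
    exact ⟨v, ⟨hv, k, hvk⟩, by omega⟩
  · rintro ⟨v, ⟨hv, a, ha⟩, hvk⟩
    exact ⟨v, hv, by omega⟩

lemma ncard_eq_add_ncard_sinks {S : Set (Fin n)} (hS : ∀ v : Fin n, Even (v : ℕ) → v ∈ S) :
    S.ncard = (n + 1) / 2 + (sinks S).ncard := by
  have hsplit : S = {v : Fin n | Even (v : ℕ)} ∪ {v ∈ S | Odd (v : ℕ)} := by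
    ext v
    rcases Nat.even_or_odd (v : ℕ) with hv | hv
    · simp [hv, hS v hv]
    · simp [hv, Nat.not_even_iff_odd.2 hv]
  have hdisj : Disjoint {v : Fin n | Even (v : ℕ)} {v ∈ S | Odd (v : ℕ)} :=
    Set.disjoint_left.2 fun v hv hv' => Nat.not_even_iff_odd.2 hv'.2 hv
  rw [ncard_sinks, ← ncard_evens, ← Set.ncard_union_eq hdisj, ← hsplit]

lemma half_le_of_Iio_subset_reach {J : Finset ℕ} {t : ℕ} (h : Set.Iio (n / 2) ⊆ reach n J t) :
    n / 2 ≤ (n % 2 + 1) * t + J.card * (2 * t + 1) := by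
  have hsub : Finset.range (n / 2) ⊆ Finset.range t ∪ Finset.Ico (n / 2 - n % 2 * t) (n / 2) ∪
      J.biUnion fun j => Finset.Icc (j - t) (j + t) := by
    intro k hk
    obtain ⟨hkn, hkt | ⟨hn, hkn'⟩ | ⟨j, hj, hkj, hjk⟩⟩ := h (Finset.mem_range.1 hk)
    · simp [hkt]
    · simp only [Nat.odd_iff.1 hn, one_mul, Finset.mem_union, Finset.mem_Ico]
      omega
    · exact Finset.mem_union_right _
        (Finset.mem_biUnion.2 ⟨j, hj, Finset.mem_Icc.2 ⟨by omega, hkj⟩⟩)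
  calc n / 2 = (Finset.range (n / 2)).card := (Finset.card_range _).symm
    _ ≤ _ := Finset.card_le_card hsub
    _ ≤ t + n % 2 * t + J.card * (2 * t + 1) := by
      refine (Finset.card_union_le _ _).trans (add_le_add ((Finset.card_union_le _ _).trans ?_) ?_)
      · rw [Finset.card_range, Nat.card_Ico]
        omega
      · exact Finset.card_biUnion_le_card_mul _ _ _ fun j _ => by simp; omega
    _ = (n % 2 + 1) * t + J.card * (2 * t + 1) := by ring

lemma exists_finset_Iio_subset_reach {b t : ℕ}
    (h : n / 2 ≤ (n % 2 + 1) * t + b * (2 * t + 1)) :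
    ∃ J : Finset ℕ, J.card ≤ b ∧ (J : Set ℕ) ⊆ Set.Iio (n / 2) ∧ Set.Iio (n / 2) ⊆ reach n J t := by
  refine ⟨((Finset.range b).image fun i => min ((2 * t + 1) * i + 2 * t) (n / 2 - 1)).filter
    (· < n / 2), (Finset.card_filter_le _ _).trans (Finset.card_image_le.trans (by simp)),
    fun k hk => (Finset.mem_filter.1 hk).2, fun k hk => ⟨hk, ?_⟩⟩
  simp only [Set.mem_Iio] at hk
  by_cases hkt : k < t
  · exact Or.inl hkt
  by_cases hend : Odd n ∧ n / 2 ≤ k + t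
  · exact Or.inr (Or.inl hend)
  refine Or.inr (Or.inr ?_)
  have hdiv := Nat.div_add_mod (k - t) (2 * t + 1)
  have hmod := Nat.mod_lt (k - t) (show 0 < 2 * t + 1 by omega)
  set i := (k - t) / (2 * t + 1)
  have hib : i < b := by
    refine Nat.lt_of_mul_lt_mul_left (a := 2 * t + 1) (lt_of_le_of_lt (Nat.le.intro hdiv) ?_)
    rw [mul_comm]
    rcases Nat.mod_two_eq_zero_or_one n with hn | hn
    · rw [hn] at h
      omega
    · rw [hn] at h
      rw [Nat.odd_iff, hn] at hend
      omega
  refine ⟨min ((2 * t + 1) * i + 2 * t) (n / 2 - 1), ?_, by omega, by omega⟩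
  exact Finset.mem_coe.2 (Finset.mem_filter.2
    ⟨Finset.mem_image.2 ⟨i, Finset.mem_range.2 hib, rfl⟩, by omega⟩)

theorem dth_le_of_half_le {b t : ℕ} (h : n / 2 ≤ (n % 2 + 1) * t + b * (2 * t + 1)) :
    dth (arc n) ≤ (n + 1) / 2 + b + t := by
  obtain ⟨J, hJb, hJn, hcov⟩ := exists_finset_Iio_subset_reach h
  set B : Set (Fin n) := {v | Even (v : ℕ) ∨ (v : ℕ) / 2 ∈ J}
  have hE (v : Fin n) (hv : Even (v : ℕ)) : v ∈ B := Or.inl hv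
  have hsinks : sinks B = J := by
    ext k
    constructor
    · rintro ⟨v, hv | hv, hvk⟩
      · exact absurd hv (by rw [hvk]; simp)
      · rwa [hvk, show (2 * k + 1) / 2 = k by omega] at hv
    · intro hk
      have : k < n / 2 := hJn hk
      refine ⟨⟨2 * k + 1, by omega⟩, Or.inr ?_, rfl⟩
      simp only
      rwa [show (2 * k + 1) / 2 = k by omega]
  have hB : (dstep (arc n))^[t] B = Set.univ := by
    rw [eq_univ_iff_Iio_subset_sinks fun v hv => subset_iterate_dstep _ _ t (hE v hv),
      sinks_iterate hE, hsinks]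
    exact hcov
  calc dth (arc n) ≤ B.ncard + t := dth_le_of_iterate_eq_univ hB
    _ = (n + 1) / 2 + J.card + t := by
      rw [ncard_eq_add_ncard_sinks hE, hsinks, Set.ncard_coe_finset]
    _ ≤ (n + 1) / 2 + b + t := by omega

theorem le_dth_of_forall_half_le {N : ℕ}
    (h : ∀ b t, n / 2 ≤ (n % 2 + 1) * t + b * (2 * t + 1) → N ≤ b + t) :
    (n + 1) / 2 + N ≤ dth (arc n) := by
  refine le_dth_of_forall_iterate_eq_univ fun B t hBt => ?_
  have hE (v : Fin n) (hv : Even (v : ℕ)) : v ∈ B :=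
    IsZFS.mem_of_forall_not ⟨t, hBt⟩ fun _ => not_arc_of_even hv
  have hfin : (sinks B).Finite := (Set.finite_Iio _).subset (sinks_subset_Iio B)
  have hcov : Set.Iio (n / 2) ⊆ reach n hfin.toFinset t := by
    rw [Set.Finite.coe_toFinset, ← sinks_iterate hE]
    exact (eq_univ_iff_Iio_subset_sinks fun v hv => subset_iterate_dstep _ _ t (hE v hv)).1 hBt
  have hN := h _ _ (half_le_of_Iio_subset_reach hcov)
  rw [ncard_eq_add_ncard_sinks hE, Set.ncard_eq_toFinset_card _ hfin]
  omega

lemma half_le_iff_le_mul {b t : ℕ} :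
    n / 2 ≤ (n % 2 + 1) * t + b * (2 * t + 1) ↔ n + 1 ≤ (2 * t + 1) * (2 * b + 1 + n % 2) := by
  have hn := Nat.div_add_mod n 2
  rcases Nat.mod_two_eq_zero_or_one n with hr | hr <;>
  · rw [hr] at hn ⊢
    constructor <;> intro h <;> nlinarith

theorem dth_eq_of_isLeast {N : ℕ}
    (h : IsLeast {N | ∃ b t, b + t = N ∧ n + 1 ≤ (2 * t + 1) * (2 * b + 1 + n % 2)} N) :
    dth (arc n) = (n + 1) / 2 + N := by
  obtain ⟨⟨b, t, rfl, hbt⟩, hmin⟩ := h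
  refine le_antisymm ((dth_le_of_half_le (half_le_iff_le_mul.2 hbt)).trans (by omega)) ?_
  exact le_dth_of_forall_half_le fun b t h => hmin ⟨b, t, rfl, half_le_iff_le_mul.1 h⟩

theorem dth_arc_of_odd (hn : Odd n) :
    dth (arc n) = (n - 1) / 2 + ⌈√((n : ℝ) + 1) - 1 / 2⌉₊ := by
  set c := ⌈√((n : ℝ) + 1) - 1 / 2⌉₊
  have hr : n % 2 = 1 := Nat.odd_iff.1 hn
  have hnc : n + 1 ≤ c * (c + 1) := by
    have hsq := le_sq_ceil_sqrt_sub_add ((n : ℝ) + 1) (δ := 1 / 2) (by norm_num)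
    by_contra! hlt
    have : (c : ℝ) * (c + 1) + 1 ≤ n + 1 := by exact_mod_cast hlt
    nlinarith
  have hc0 : c ≠ 0 := by
    rintro h
    simp [h] at hnc
  have hmem : n + 1 ≤ (2 * (c / 2) + 1) * (2 * (c - 1 - c / 2) + 1 + n % 2) := by
    rw [hr]
    obtain ⟨u, hu | hu⟩ := Nat.even_or_odd' c <;> rw [hu] at hnc hc0 ⊢
    · obtain ⟨w, rfl⟩ : ∃ w, u = w + 1 := ⟨u - 1, by omega⟩
      rw [show 2 * (w + 1) / 2 = w + 1 by omega, show 2 * (w + 1) - 1 - (w + 1) = w by omega]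
      nlinarith
    · rw [show (2 * u + 1) / 2 = u by omega, show 2 * u + 1 - 1 - u = u by omega]
      nlinarith
  rw [dth_eq_of_isLeast (N := c - 1) ⟨⟨c - 1 - c / 2, c / 2, by omega, hmem⟩, ?_⟩]
  · omega
  rintro _ ⟨b, t, rfl, hbt⟩
  rw [hr] at hbt
  have hsqrt : 2 * √((n : ℝ) + 1) ≤ (2 * t + 1) + (2 * b + 2) :=
    two_mul_sqrt_le_add (by positivity) (by positivity) (by exact_mod_cast hbt)
  have : c ≤ b + t + 1 := Nat.ceil_le.2 (by push_cast; linarith)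
  omega

theorem dth_arc_of_even (hn : Even n) :
    dth (arc n) = n / 2 + ⌈√((n : ℝ) + 1) - 1⌉₊ := by
  set c := ⌈√((n : ℝ) + 1) - 1⌉₊
  have hr : n % 2 = 0 := Nat.even_iff.1 hn
  have hnc : n + 1 ≤ (c + 1) ^ 2 := by
    have hsq : (n : ℝ) + 1 ≤ (c + 1) ^ 2 := le_sq_ceil_sqrt_sub_add _ zero_le_one
    exact_mod_cast hsq
  have hmem : n + 1 ≤ (2 * (c / 2) + 1) * (2 * (c - c / 2) + 1 + n % 2) := by
    rw [hr]
    obtain ⟨u, hu | hu⟩ := Nat.even_or_odd' c <;> rw [hu] at hnc ⊢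
    · rw [show 2 * u / 2 = u by omega, show 2 * u - u = u by omega]
      nlinarith
    · rw [show (2 * u + 1) / 2 = u by omega, show 2 * u + 1 - u = u + 1 by omega]
      have h4 : (2 * u + 1 + 1) ^ 2 = 4 * (u + 1) ^ 2 := by ring
      have h3 : (2 * u + 1) * (2 * (u + 1) + 1 + 0) + 1 = 4 * (u + 1) ^ 2 := by ring
      omega
  rw [dth_eq_of_isLeast (N := c) ⟨⟨c - c / 2, c / 2, by omega, hmem⟩, ?_⟩]
  · omega
  rintro _ ⟨b, t, rfl, hbt⟩
  rw [hr] at hbt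
  have hsqrt : 2 * √((n : ℝ) + 1) ≤ (2 * t + 1) + (2 * b + 1) :=
    two_mul_sqrt_le_add (by positivity) (by positivity) (by exact_mod_cast hbt)
  exact Nat.ceil_le.2 (by push_cast; linarith)

end AlternatingPath

/-- The throttling number of the alternating path on `n` vertices (the orientation of the
path in which every vertex is a source or a sink; here arcs point from even-indexed
vertices to their odd-indexed neighbors). -/
theorem stmt19 (n : ℕ) :
    (Odd n →
      dth (fun i j : Fin n =>
          ((j : ℕ) = (i : ℕ) + 1 ∨ (i : ℕ) = (j : ℕ) + 1) ∧ Even (i : ℕ))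
        = (n - 1) / 2 + ⌈Real.sqrt (n + 1) - 1 / 2⌉₊) ∧
    (Even n →
      dth (fun i j : Fin n =>
          ((j : ℕ) = (i : ℕ) + 1 ∨ (i : ℕ) = (j : ℕ) + 1) ∧ Even (i : ℕ))
        = n / 2 + ⌈Real.sqrt (n + 1) - 1⌉₊) :=
  ⟨AlternatingPath.dth_arc_of_odd, AlternatingPath.dth_arc_of_even⟩
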